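/- arXiv:1202.1709 — 4 statements merged into one kernel-verified Lean document; each statement's English description precedes it below -/
import Mathlib

section
/- For the spanning tree of a sector of the heptagrid {7,3} — in which the root is white, every white node has exactly 3 sons of which exactly one is black, and every black node has exactly 2 sons of which exactly one is black — the number of nodes on level n equals the Fibonacci number f_{2n+1}, where (f_m) is the Fibonacci sequence with f_1 = 1, f_2 = 2. Concretely: defining w, b : ℕ → ℕ by w 0 = 1, b 0 = 0, w (n+1) = 2·w n + b n, b (n+1) = w n + b n, one has w n + b n = Nat.fib (2n + 2) for all n. -/
/-!
The white and black counts on level `n` are the consecutive Fibonacci numbers `Nat.fib (2 * n + 1)`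
and `Nat.fib (2 * n)`: the level recursion `(w, b) ↦ (2 w + b, w + b)` is two steps of the Fibonacci
recursion.
-/

theorem Nat.fib_add_three (m : ℕ) : Nat.fib (m + 3) = 2 * Nat.fib (m + 1) + Nat.fib m := by
  rw [Nat.fib_add_two, Nat.fib_add_two]
  ring

theorem heptagrid_white_black_eq_fib (w b : ℕ → ℕ)
    (hw0 : w 0 = 1) (hb0 : b 0 = 0)
    (hw : ∀ n, w (n + 1) = 2 * w n + b n)
    (hb : ∀ n, b (n + 1) = w n + b n) (n : ℕ) :
    w n = Nat.fib (2 * n + 1) ∧ b n = Nat.fib (2 * n) := by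
  induction n with
  | zero => simp [hw0, hb0]
  | succ n ih =>
    obtain ⟨hwn, hbn⟩ := ih
    constructor
    · rw [hw, hwn, hbn, show 2 * (n + 1) + 1 = 2 * n + 3 by ring, Nat.fib_add_three]
    · rw [hb, hwn, hbn, show 2 * (n + 1) = 2 * n + 2 by ring, Nat.fib_add_two, add_comm]

/-- In the Fibonacci tree spanning a sector of the heptagrid `{7,3}`
(root white; a white node has 3 sons, exactly one black; a black node has
2 sons, exactly one black), let `w n` and `b n` be the numbers of white
and black nodes on level `n`.  Then the number of nodes on level `n` is
the Fibonacci number `f_{2n+1}` (with `f_1 = 1`, `f_2 = 2`), i.e.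
`w n + b n = Nat.fib (2*n + 2)`. -/
theorem heptagrid_level_count_eq_fib (w b : ℕ → ℕ)
    (hw0 : w 0 = 1) (hb0 : b 0 = 0)
    (hw : ∀ n, w (n + 1) = 2 * w n + b n)
    (hb : ∀ n, b (n + 1) = w n + b n) :
    ∀ n, w n + b n = Nat.fib (2 * n + 2) := by
  intro n
  obtain ⟨hwn, hbn⟩ := heptagrid_white_black_eq_fib w b hw0 hb0 hw hb n
  rw [hwn, hbn, Nat.fib_add_two, add_comm]
end

section
/- Let p ≥ 7 be an integer and consider the tree spanning a sector of the tiling {p,3}: the root is white, every white node has exactly p − 4 sons of which exactly one is black, and every black node has exactly p − 5 sons of which exactly one is black. Define w, b : ℕ → ℕ by w 0 = 1, b 0 = 0, w (n+1) = (p−5)·w n + (p−6)·b n, b (n+1) = w n + b n, and let u n = w n + b n be the number of nodes on level n. Then u 0 = 1, u 1 = p − 4, and for all n, u (n+2) + u n = (p − 4) · u (n+1). -/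
/-! Every node has exactly one black son, so `b (n+1) = u n`; and a white node has one son
more than a black node, so `w (n+1) + b n = (p-5) * u n`. Adding the two identities one level
up gives `u (n+2) + u n = (p-5) * u (n+1) + u (n+1)`. -/

section TwoColourRecurrence

variable {R : Type*} [CommSemiring R] {a c : R} {w b : ℕ → R}

theorem white_succ_add_black (hca : c + 1 = a) (hw : ∀ n, w (n + 1) = a * w n + c * b n)
    (n : ℕ) : w (n + 1) + b n = a * (w n + b n) := by
  rw [hw, ← hca]
  ring

theorem white_add_black_recurrence (hca : c + 1 = a) (hw : ∀ n, w (n + 1) = a * w n + c * b n)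
    (hb : ∀ n, b (n + 1) = w n + b n) (n : ℕ) :
    w (n + 2) + b (n + 2) + (w n + b n) = (a + 1) * (w (n + 1) + b (n + 1)) :=
  calc w (n + 2) + b (n + 2) + (w n + b n)
      = (w (n + 2) + b (n + 1)) + (w (n + 1) + b (n + 1)) := by rw [hb (n + 1), hb n]; ring
    _ = (a + 1) * (w (n + 1) + b (n + 1)) := by rw [white_succ_add_black hca hw]; ring

end TwoColourRecurrence

/-- In the tree spanning a sector of the tiling `{p,3}` (`p ≥ 7`): the root is
white, a white node has `p-4` sons of which exactly one is black, and a black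
node has `p-5` sons of which exactly one is black.  With `w n`, `b n` the
numbers of white and black nodes on level `n` and `u n = w n + b n` the total
number of nodes on level `n`, one has `u 0 = 1`, `u 1 = p - 4` and
`u (n+2) + u n = (p-4) * u (n+1)` for all `n`. -/
theorem sector_tree_level_recurrence (p : ℕ) (hp : 7 ≤ p) (w b u : ℕ → ℕ)
    (hw0 : w 0 = 1) (hb0 : b 0 = 0)
    (hw : ∀ n, w (n + 1) = (p - 5) * w n + (p - 6) * b n)
    (hb : ∀ n, b (n + 1) = w n + b n)
    (hu : ∀ n, u n = w n + b n) :
    u 0 = 1 ∧ u 1 = p - 4 ∧ ∀ n, u (n + 2) + u n = (p - 4) * u (n + 1) := by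
  have hca : p - 6 + 1 = p - 5 := by omega
  have ha : p - 5 + 1 = p - 4 := by omega
  refine ⟨by simp [hu, hw0, hb0], by simp [hu, hw, hb, hw0, hb0, ha], fun n => ?_⟩
  simp only [hu, ← ha]
  exact white_add_black_recurrence hca hw hb n
end

section
/- Let p ≥ 7 be an integer and let u : ℕ → ℤ be defined by u 0 = 1, u 1 = p − 4, and u (n+2) = (p − 4)·u (n+1) − u n. Then every natural number N can be written as N = Σ_{i=0}^{k} a_i · u i for some k and some digits a_i ∈ ℕ with a_i ≤ p − 3 for all i. -/
/-!
Greedy expansion: if `u 0 = 1`, `u` is strictly increasing and `u (n+1) ≤ (b+1) * u n`, then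
every `N < u (k+1)` is `q * u k + r` with `q = N / u k < b + 1` and `r < u k`, and `r` is expanded
recursively in the lower terms. For the `{p,3}` sequence, `u (n+1) ≤ (p-4) * u n` because the
subtracted term `u (n-1)` is positive, so the digits never exceed `p - 5`.
-/

open Finset

theorem exists_digits_of_lt {u : ℕ → ℕ} {b : ℕ} (h0 : u 0 = 1) (hpos : ∀ n, 0 < u n)
    (hgrow : ∀ n, u (n + 1) ≤ (b + 1) * u n) (k : ℕ) :
    ∀ N < u k, ∃ a : ℕ → ℕ, (∀ i, a i ≤ b) ∧ N = ∑ i ∈ range k, a i * u i := by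
  induction k with
  | zero =>
    intro N hN
    exact ⟨fun _ => 0, fun _ => Nat.zero_le b, by simp_all⟩
  | succ k ih =>
    intro N hN
    obtain ⟨a, ha, hr⟩ := ih (N % u k) (Nat.mod_lt N (hpos k))
    have hq : N / u k ≤ b :=
      Nat.lt_succ_iff.mp <| (Nat.div_lt_iff_lt_mul (hpos k)).mpr (hN.trans_le (hgrow k))
    refine ⟨Function.update a k (N / u k), fun i => ?_, ?_⟩
    · rcases eq_or_ne i k with rfl | hi
      · simpa using hq
      · simpa [hi] using ha i
    · rw [sum_range_succ, Function.update_self,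
        sum_congr rfl fun i hi => by rw [Function.update_of_ne (mem_range.mp hi).ne], ← hr,
        Nat.mod_add_div']

theorem exists_digits {u : ℕ → ℕ} {b : ℕ} (h0 : u 0 = 1) (hmono : StrictMono u)
    (hgrow : ∀ n, u (n + 1) ≤ (b + 1) * u n) (N : ℕ) :
    ∃ (k : ℕ) (a : ℕ → ℕ), (∀ i, a i ≤ b) ∧ N = ∑ i ∈ range (k + 1), a i * u i := by
  have hpos n : 0 < u n := by
    have := hmono.monotone n.zero_le
    omega
  exact ⟨N, exists_digits_of_lt h0 hpos hgrow (N + 1) N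
    ((Nat.lt_succ_self N).trans_le (hmono.id_le _))⟩

theorem one_le_lt_succ_le_mul_of_recurrence {c : ℤ} (hc : 2 ≤ c) {u : ℕ → ℤ}
    (h0 : u 0 = 1) (h1 : u 1 = c) (hrec : ∀ n, u (n + 2) = c * u (n + 1) - u n) (n : ℕ) :
    1 ≤ u n ∧ u n < u (n + 1) ∧ u (n + 1) ≤ c * u n := by
  induction n with
  | zero => simp only [h0, h1]; omega
  | succ n ih =>
    obtain ⟨hpos, hlt, -⟩ := ih
    refine ⟨by omega, ?_, by linarith [hrec n]⟩
    nlinarith [hrec n]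

/-- For an integer `p ≥ 7` and the sequence `u : ℕ → ℤ` with `u 0 = 1`,
`u 1 = p - 4`, `u (n+2) = (p-4) * u (n+1) - u n`, every natural number `N`
can be written as `N = ∑_{i=0}^{k} a i * u i` for some `k` and digits
`a i ∈ ℕ` with `a i ≤ p - 3` for all `i`. -/
theorem sector_tree_representation (p : ℤ) (hp : 7 ≤ p) (u : ℕ → ℤ)
    (hu0 : u 0 = 1) (hu1 : u 1 = p - 4)
    (hrec : ∀ n, u (n + 2) = (p - 4) * u (n + 1) - u n)
    (N : ℕ) :
    ∃ (k : ℕ) (a : ℕ → ℕ), (∀ i, (a i : ℤ) ≤ p - 3) ∧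
      (N : ℤ) = ∑ i ∈ Finset.range (k + 1), (a i : ℤ) * u i := by
  have hu := one_le_lt_succ_le_mul_of_recurrence (by omega) hu0 hu1 hrec
  lift u to ℕ → ℕ using fun n => by linarith [(hu n).1]
  lift p - 5 to ℕ using (by omega) with b hb
  have hgrow n : u (n + 1) ≤ (b + 1) * u n := by
    zify
    rw [hb]
    linarith [(hu n).2.2]
  obtain ⟨k, a, ha, hN⟩ := exists_digits (by exact_mod_cast hu0)
    (strictMono_nat_of_lt_succ fun n => by exact_mod_cast (hu n).2.1) hgrow N
  exact ⟨k, a, fun i => by have := ha i; omega, by exact_mod_cast hN⟩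
end

section
/- Let p ≥ 7 be an integer and let u : ℕ → ℤ be defined by u 0 = 1, u 1 = p − 4, and u (n+2) = (p − 4)·u (n+1) − u n. Then every natural number N has exactly one finitely supported digit sequence a : ℕ → ℕ such that N = Σ_i a i · u i and, for every k ≥ 1, Σ_{i<k} a i · u i < u k. (This is the normalized — greedy — representation, which makes the coordinate of each tile unique.) -/
/-!
Only two properties of `u` matter: `u 0 = 1` and `u` is strictly increasing, which for the
sector sequence follows from the recurrence as soon as `p - 4 ≥ 2`.
For such a numeration system the normalization forces the top digit of a representation
below `u (K+1)` to be the quotient of `N` by `u K` and the lower part to be the remainder,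
which is below `u K`. Induction on `K` then gives both existence and uniqueness.
-/

open Finset

namespace GreedyNumeration

variable {u : ℕ → ℤ} {a b : ℕ → ℕ}

theorem pos_of_monotone (hu0 : u 0 = 1) (hmono : Monotone u) (i : ℕ) : 0 < u i := by
  have := hmono i.zero_le
  omega

theorem natCast_add_le_of_strictMono (hmono : StrictMono u) (n : ℕ) : (n : ℤ) + u 0 ≤ u n := by
  induction n with
  | zero => simp
  | succ n ih =>
    have := hmono (Nat.lt_add_one n)
    push_cast
    omega

def digitSum (u : ℕ → ℤ) (a : ℕ → ℕ) (k : ℕ) : ℤ :=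
  ∑ i ∈ range k, (a i : ℤ) * u i

def IsGreedy (u : ℕ → ℤ) (a : ℕ → ℕ) : Prop :=
  ∀ k, 1 ≤ k → digitSum u a k < u k

@[simp]
theorem digitSum_zero : digitSum u a 0 = 0 := rfl

theorem digitSum_succ (k : ℕ) : digitSum u a (k + 1) = digitSum u a k + a k * u k :=
  sum_range_succ _ _

theorem digitSum_nonneg (hu : ∀ i, 0 ≤ u i) (k : ℕ) : 0 ≤ digitSum u a k :=
  sum_nonneg fun i _ => mul_nonneg (Int.natCast_nonneg _) (hu i)

theorem digitSum_update_of_le {K k : ℕ} (hk : k ≤ K) (q : ℕ) :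
    digitSum u (Function.update a K q) k = digitSum u a k :=
  sum_congr rfl fun i hi => by
    rw [Function.update_of_ne (by simp at hi; omega)]

theorem finsum_eq_digitSum {K : ℕ} (ha : ∀ i, a i ≠ 0 → i < K) :
    ∑ᶠ i, (a i : ℤ) * u i = digitSum u a K :=
  finsum_eq_finsetSum_of_support_subset _ fun i hi =>
    mem_range.mpr (ha i fun h => hi (by simp [h]))

theorem digitSum_eq_of_le {K k : ℕ} (ha : ∀ i, a i ≠ 0 → i < K) (hk : K ≤ k) :
    digitSum u a k = digitSum u a K := by
  rw [← finsum_eq_digitSum ha, ← finsum_eq_digitSum fun i hi => (ha i hi).trans_le hk]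

theorem IsGreedy.digitSum_lt (ha : IsGreedy u a) (hu0 : 0 < u 0) (k : ℕ) :
    digitSum u a k < u k := by
  rcases k.eq_zero_or_pos with rfl | hk
  · simpa using hu0
  · exact ha k hk

theorem IsGreedy.eq_of_digitSum_eq (hu : ∀ i, 0 < u i) (ha : IsGreedy u a) (hb : IsGreedy u b)
    {K : ℕ} (hab : digitSum u a K = digitSum u b K) {i : ℕ} (hi : i < K) : a i = b i := by
  induction K with
  | zero => omega
  | succ K ih =>
    -- both sides of `hab` are divisions with remainder by `u K`
    have hdiv (c : ℕ → ℕ) (hc : IsGreedy u c) :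
        digitSum u c (K + 1) / u K = c K ∧ digitSum u c (K + 1) % u K = digitSum u c K :=
      (Int.ediv_emod_unique (hu K)).mpr
        ⟨by rw [digitSum_succ]; ring, digitSum_nonneg (fun i => (hu i).le) K,
          hc.digitSum_lt (hu 0) K⟩
    obtain ⟨haq, har⟩ := hdiv a ha
    obtain ⟨hbq, hbr⟩ := hdiv b hb
    rcases (Nat.lt_succ_iff.mp hi).lt_or_eq with hi | rfl
    · exact ih (by rw [← har, ← hbr, hab]) hi
    · exact_mod_cast haq.symm.trans (hab ▸ hbq)

theorem IsGreedy.eq_of_finsum_eq (hu : ∀ i, 0 < u i) (ha : IsGreedy u a) (hb : IsGreedy u b)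
    (ha_fin : {i | a i ≠ 0}.Finite) (hb_fin : {i | b i ≠ 0}.Finite)
    (hab : ∑ᶠ i, (a i : ℤ) * u i = ∑ᶠ i, (b i : ℤ) * u i) : a = b := by
  obtain ⟨K, hK⟩ := (ha_fin.union hb_fin).bddAbove
  have ha_lt (i : ℕ) (hi : a i ≠ 0) : i < K + 1 := Nat.lt_succ_of_le (hK (Or.inl hi))
  have hb_lt (i : ℕ) (hi : b i ≠ 0) : i < K + 1 := Nat.lt_succ_of_le (hK (Or.inr hi))
  rw [finsum_eq_digitSum ha_lt, finsum_eq_digitSum hb_lt] at hab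
  funext i
  by_cases hi : i < K + 1
  · exact ha.eq_of_digitSum_eq hu hb hab hi
  · rw [not_imp_comm.mp (ha_lt i) hi, not_imp_comm.mp (hb_lt i) hi]

theorem exists_isGreedy_digitSum_eq (hu0 : u 0 = 1) (hmono : Monotone u) (K : ℕ) {N : ℤ}
    (hN : 0 ≤ N) (hNK : N < u K) :
    ∃ a : ℕ → ℕ, (∀ i, a i ≠ 0 → i < K) ∧ digitSum u a K = N ∧ IsGreedy u a := by
  have hu := pos_of_monotone hu0 hmono
  induction K generalizing N with
  | zero =>
    obtain rfl : N = 0 := by omega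
    exact ⟨0, by simp, rfl, fun k _ => by simp [digitSum, hu k]⟩
  | succ K ih =>
    obtain ⟨b, hb_lt, hb_sum, hb⟩ :=
      ih (Int.emod_nonneg N (hu K).ne') (Int.emod_lt_of_pos N (hu K))
    have hq : ((N / u K).toNat : ℤ) = N / u K := Int.toNat_of_nonneg (Int.ediv_nonneg hN (hu K).le)
    set a := Function.update b K (N / u K).toNat with ha_def
    have ha_lt (i : ℕ) (hi : a i ≠ 0) : i < K + 1 := by
      by_cases hiK : i = K
      · omega
      · rw [ha_def, Function.update_of_ne hiK] at hi
        exact (hb_lt i hi).trans K.lt_succ_self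
    have ha_sum : digitSum u a (K + 1) = N := by
      rw [ha_def, digitSum_succ, digitSum_update_of_le le_rfl, hb_sum, Function.update_self, hq,
        mul_comm, Int.emod_add_mul_ediv]
    refine ⟨a, ha_lt, ha_sum, fun k hk => ?_⟩
    rcases le_or_gt k K with hkK | hKk
    · rw [digitSum_update_of_le hkK]
      exact hb k hk
    · rw [digitSum_eq_of_le ha_lt hKk, ha_sum]
      exact hNK.trans_le (hmono hKk)

theorem existsUnique_isGreedy_repr (hu0 : u 0 = 1) (hmono : StrictMono u) (N : ℕ) :
    ∃! a : ℕ → ℕ, {i | a i ≠ 0}.Finite ∧ (N : ℤ) = ∑ᶠ i, (a i : ℤ) * u i ∧ IsGreedy u a := by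
  have hu := pos_of_monotone hu0 hmono.monotone
  have hN : (N : ℤ) < u (N + 1) := by
    have := natCast_add_le_of_strictMono hmono (N + 1)
    push_cast at this
    omega
  obtain ⟨a, ha_lt, ha_sum, ha⟩ :=
    exists_isGreedy_digitSum_eq hu0 hmono.monotone (N + 1) N.cast_nonneg hN
  have ha_fin : {i | a i ≠ 0}.Finite := (Set.finite_lt_nat (N + 1)).subset ha_lt
  have ha_finsum : (N : ℤ) = ∑ᶠ i, (a i : ℤ) * u i := by rw [finsum_eq_digitSum ha_lt, ha_sum]
  refine ⟨a, ⟨ha_fin, ha_finsum, ha⟩, ?_⟩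
  rintro b ⟨hb_fin, hb_finsum, hb⟩
  exact hb.eq_of_finsum_eq hu ha hb_fin ha_fin (hb_finsum.symm.trans ha_finsum)

end GreedyNumeration

theorem strictMono_of_linearRecurrence {u : ℕ → ℤ} {c : ℤ} (hc : 2 ≤ c) (hu0 : 0 ≤ u 0)
    (hu01 : u 0 < u 1) (hrec : ∀ n, u (n + 2) = c * u (n + 1) - u n) : StrictMono u := by
  have step (n : ℕ) : 0 ≤ u n ∧ u n < u (n + 1) := by
    induction n with
    | zero => exact ⟨hu0, hu01⟩
    | succ n ih =>
      obtain ⟨hn, hlt⟩ := ih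
      refine ⟨hn.trans hlt.le, ?_⟩
      -- `u (n+2) - u (n+1) = (c - 2) * u (n+1) + (u (n+1) - u n)`
      rw [hrec n]
      nlinarith
  exact strictMono_nat_of_lt_succ fun n => (step n).2

/-- For an integer `p ≥ 7` and the sequence `u : ℕ → ℤ` with `u 0 = 1`,
`u 1 = p - 4`, `u (n+2) = (p-4) * u (n+1) - u n`, every natural number `N`
has exactly one finitely supported digit sequence `a : ℕ → ℕ` such that
`N = ∑ᶠ i, a i * u i` and, for every `k ≥ 1`,
`∑_{i<k} a i * u i < u k` (the normalized, greedy, representation). -/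
theorem sector_tree_greedy_representation_unique (p : ℤ) (hp : 7 ≤ p)
    (u : ℕ → ℤ) (hu0 : u 0 = 1) (hu1 : u 1 = p - 4)
    (hrec : ∀ n, u (n + 2) = (p - 4) * u (n + 1) - u n)
    (N : ℕ) :
    ∃! a : ℕ → ℕ, {i | a i ≠ 0}.Finite ∧
      (N : ℤ) = ∑ᶠ i, (a i : ℤ) * u i ∧
      ∀ k, 1 ≤ k → ∑ i ∈ Finset.range k, (a i : ℤ) * u i < u k := by
  have hmono : StrictMono u :=
    strictMono_of_linearRecurrence (by linarith) (by rw [hu0]; norm_num)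
      (by rw [hu0, hu1]; linarith) hrec
  exact GreedyNumeration.existsUnique_isGreedy_repr hu0 hmono N
end
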